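/- arXiv:2112.04416 — 2 statements merged into one kernel-verified Lean document; each statement's English description precedes it below -/
import Mathlib

section
/- There exists a continuous 1-periodic function Φ : ℝ → ℝ such that the periodic complexity of the Thue–Morse word satisfies h_t(n) = n Φ({log₂ n}) + O(log n) as n → ∞, where {z} denotes the fractional part of z. -/
open Finset Filter Asymptotics

/-- `n` is a local period of the infinite word `w` at position `i`:
`n ≥ 1` and either (`n ≤ i` and `w_{i+k} = w_{i-n+k}` for all `k < n`)
or (`n > i` and `w_k = w_{n+k}` for all `k < i`). -/
def IsLocalPeriodAt {α : Type*} (w : ℕ → α) (i n : ℕ) : Prop :=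
  1 ≤ n ∧ ((n ≤ i ∧ ∀ k < n, w (i + k) = w (i - n + k)) ∨
           (i < n ∧ ∀ k < i, w k = w (n + k)))

/-- The periodicity function `p_w(i)`: the least local period of `w` at `i`. -/
noncomputable def perFn {α : Type*} (w : ℕ → α) (i : ℕ) : ℕ :=
  sInf {n | IsLocalPeriodAt w i n}

/-- The summatory function `P_w(n) = ∑_{j<n} p_w(j)`. -/
noncomputable def sumFn {α : Type*} (w : ℕ → α) (n : ℕ) : ℕ :=
  ∑ j ∈ Finset.range n, perFn w j

/-- The periodic complexity `h_w(n) = P_w(n)/n`. -/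
noncomputable def perComplexity {α : Type*} (w : ℕ → α) (n : ℕ) : ℝ :=
  (sumFn w n : ℝ) / n

/-- The Thue–Morse word: `t_i = 0` iff the number of 1's in the binary
representation of `i` is even. -/
def tm (i : ℕ) : ℕ :=
  if Even ((Nat.digits 2 i).count 1) then 0 else 1

/-! ### Basic recursions for the Thue–Morse word -/

lemma tm_le_one (i : ℕ) : tm i ≤ 1 := by unfold tm; split <;> simp

lemma tm_two_mul (m : ℕ) : tm (2*m) = tm m := by
  rcases Nat.eq_zero_or_pos m with rfl | hm
  · rfl
  · unfold tm
    rw [Nat.digits_def' (by norm_num) (by omega), Nat.mul_div_cancel_left _ (by norm_num),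
      Nat.mul_mod_right]
    simp

lemma tm_two_mul_add_one (m : ℕ) : tm (2*m+1) + tm m = 1 := by
  have h : Nat.digits 2 (2*m+1) = 1 :: Nat.digits 2 m := by
    rw [Nat.digits_def' (by norm_num) (by omega)]
    congr 1
    · omega
    · congr 1; omega
  have hc : ((Nat.digits 2 (2*m+1)).count 1) = ((Nat.digits 2 m)).count 1 + 1 := by
    rw [h]; simp
  unfold tm
  rw [hc]
  rcases Nat.even_or_odd ((Nat.digits 2 m).count 1) with he | ho
  · rw [if_pos he, if_neg (by simp [Nat.even_add_one, he])]
  · have hne : ¬ Even ((Nat.digits 2 m).count 1) := Nat.not_even_iff_odd.mpr ho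
    rw [if_neg hne, if_pos (by simp [Nat.even_add_one, hne])]

lemma tm_zero : tm 0 = 0 := by unfold tm; norm_num

lemma tm_one : tm 1 = 1 := by
  unfold tm
  rw [Nat.digits_def' (by norm_num : (1:ℕ) < 2) one_pos]
  norm_num

lemma tm_two : tm 2 = 1 := by have := tm_two_mul 1; norm_num [tm_one] at this; exact this

lemma tm_three : tm 3 = 0 := by have := tm_two_mul_add_one 1; norm_num [tm_one] at this; omega

lemma tm_four : tm 4 = 1 := by have := tm_two_mul 2; norm_num [tm_two] at this; exact this

lemma tm_ne (m : ℕ) : tm (2*m) ≠ tm (2*m+1) := by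
  have h1 := tm_two_mul m
  have h2 := tm_two_mul_add_one m
  have h3 := tm_le_one m
  omega

/-! ### Every square factor of the Thue–Morse word is centered at an even position -/

lemma sq_parity : ∀ n, 1 ≤ n → ∀ s, (∀ j < n, tm (s+j) = tm (s+n+j)) → Even (s+n) := by
  intro n
  induction n using Nat.strong_induction_on with
  | _ n IH =>
    intro hn s H
    rcases Nat.even_or_odd n with ⟨m, hm⟩ | ⟨m, hm⟩
    · subst hm
      have hm1 : 1 ≤ m := by omega
      rcases Nat.even_or_odd s with ⟨c, hc⟩ | ⟨c, hc⟩
      · exact ⟨c + m, by omega⟩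
      · exfalso
        subst hc
        have sq1 : ∀ j < m, tm (c+1+j) = tm (c+1+m+j) := by
          intro j hj
          have h1 := H (2*j+1) (by omega)
          have e1 : 2*c+1 + (2*j+1) = 2*(c+1+j) := by ring
          have e2 : 2*c+1 + (m+m) + (2*j+1) = 2*(c+1+m+j) := by ring
          rw [e1, e2, tm_two_mul, tm_two_mul] at h1
          exact h1
        have sq2 : ∀ j < m, tm (c+j) = tm (c+m+j) := by
          intro j hj
          have h2 := H (2*j) (by omega)
          have e3 : 2*c+1 + 2*j = 2*(c+j)+1 := by ring
          have e4 : 2*c+1 + (m+m) + 2*j = 2*(c+m+j)+1 := by ring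
          rw [e3, e4] at h2
          have a1 := tm_two_mul_add_one (c+j)
          have a2 := tm_two_mul_add_one (c+m+j)
          omega
        have he1 : Even (c+1+m) := IH m (by omega) hm1 (c+1) sq1
        have he2 : Even (c+m) := IH m (by omega) hm1 c sq2
        obtain ⟨a, ha⟩ := he1
        obtain ⟨b, hb⟩ := he2
        omega
    · subst hm
      rcases Nat.even_or_odd s with ⟨c, hc⟩ | ⟨c, hc⟩
      · exfalso
        subst hc
        rcases Nat.eq_zero_or_pos m with rfl | hm1
        · have h := H 0 (by omega)
          simp only [Nat.add_zero] at h
          norm_num at h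
          have hne := tm_ne c
          rw [two_mul] at hne
          exact hne h
        · have R1 : ∀ a ≤ m, tm (c+a) + tm (c+m+a) = 1 := by
            intro a ha
            have h := H (2*a) (by omega)
            have e1 : c + c + 2*a = 2*(c+a) := by ring
            have e2 : c + c + (2*m+1) + 2*a = 2*(c+m+a)+1 := by ring
            rw [e1, e2, tm_two_mul] at h
            have := tm_two_mul_add_one (c+m+a)
            omega
          have R2 : ∀ a < m, tm (c+m+a+1) + tm (c+a) = 1 := by
            intro a ha
            have h := H (2*a+1) (by omega)
            have e1 : c + c + (2*a+1) = 2*(c+a)+1 := by ring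
            have e2 : c + c + (2*m+1) + (2*a+1) = 2*(c+m+a+1) := by ring
            rw [e1, e2, tm_two_mul] at h
            have := tm_two_mul_add_one (c+a)
            omega
          have const : ∀ a ≤ m, tm (c+a) = tm c := by
            intro a
            induction a with
            | zero => intro _; rfl
            | succ b ihb =>
              intro hb1
              have h1 := R1 (b+1) (by omega)
              have e1 : c + (b+1) = c + b + 1 := by omega
              have e2 : c + m + (b+1) = c + m + b + 1 := by omega
              rw [e1, e2] at h1
              have h2 := R2 b (by omega)
              have h3 := ihb (by omega)
              rw [e1]
              omega
          have h0 := R1 0 (by omega)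
          have hm0 := const m le_rfl
          simp only [Nat.add_zero] at h0
          omega
      · exact ⟨c + m + 1, by omega⟩

/-! ### The prefix of length `2^(k+1)` occurs at position `3·2^k`, but the prefix of
length `2^k + 1` does not occur at any position in `(2^k, 3·2^k)` -/

lemma prefix_occ : ∀ k, ∀ j < 2^(k+1), tm (3*2^k + j) = tm j := by
  intro k
  induction k with
  | zero =>
    intro j hj
    norm_num at hj
    interval_cases j
    · rw [show 3*2^0 + 0 = 3 by norm_num, tm_three, tm_zero]
    · rw [show 3*2^0 + 1 = 4 by norm_num, tm_four, tm_one]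
  | succ k IH =>
    intro j hj
    have hp1 : (2:ℕ)^(k+1) = 2*2^k := by rw [pow_succ]; ring
    have hp2 : (2:ℕ)^(k+2) = 2*2^(k+1) := by rw [pow_succ]; ring
    rcases Nat.even_or_odd j with ⟨a, ha⟩ | ⟨a, ha⟩
    · have e : 3*2^(k+1) + j = 2*(3*2^k + a) := by omega
      have e2 : j = 2*a := by omega
      rw [e, e2, tm_two_mul, tm_two_mul]
      exact IH a (by omega)
    · have e : 3*2^(k+1) + j = 2*(3*2^k + a) + 1 := by omega
      have e2 : j = 2*a + 1 := by omega
      have h1 := tm_two_mul_add_one (3*2^k + a)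
      have h2 := tm_two_mul_add_one a
      have h3 := IH a (by omega)
      rw [e, e2]
      omega

lemma no_prefix_occ : ∀ k, ∀ n, 2^k < n → n < 3*2^k → ¬(∀ j ≤ 2^k, tm j = tm (n+j)) := by
  intro k
  induction k with
  | zero =>
    intro n h1 h2 H
    have hn : n = 2 := by norm_num at h1 h2; omega
    have := H 0 (by norm_num)
    rw [hn, tm_zero, Nat.add_zero, tm_two] at this
    exact absurd this (by norm_num)
  | succ k IH =>
    intro n h1 h2 H
    have hp1 : (2:ℕ)^(k+1) = 2*2^k := by rw [pow_succ]; ring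
    rcases Nat.even_or_odd n with ⟨a, ha⟩ | ⟨u, hu⟩
    · refine IH a (by omega) (by omega) ?_
      intro j hj
      have h := H (2*j) (by omega)
      have e1 : n + 2*j = 2*(a+j) := by omega
      rw [e1, tm_two_mul, tm_two_mul] at h
      exact h
    · have R1 : ∀ a ≤ 2^k, tm a + tm (u+a) = 1 := by
        intro a ha
        have h := H (2*a) (by omega)
        have e1 : n + 2*a = 2*(u+a)+1 := by omega
        rw [e1, tm_two_mul] at h
        have := tm_two_mul_add_one (u+a)
        omega
      have R2 : ∀ a < 2^k, tm (u+a+1) + tm a = 1 := by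
        intro a ha
        have h := H (2*a+1) (by omega)
        have e1 : n + (2*a+1) = 2*(u+a+1) := by omega
        rw [e1, tm_two_mul] at h
        have := tm_two_mul_add_one a
        omega
      have hpk : 1 ≤ 2^k := Nat.one_le_two_pow
      have h0 := R1 0 (by omega)
      have h1' := R1 1 hpk
      have h2' := R2 0 (by omega)
      simp only [Nat.add_zero] at h0 h2'
      rw [tm_zero] at h0 h2'
      rw [tm_one] at h1'
      omega

/-! ### Exact values of the periodicity function of the Thue–Morse word -/

lemma mem_odd (i : ℕ) (hi : Odd i) : IsLocalPeriodAt tm i (3*2^(Nat.log 2 i)) := by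
  set k := Nat.log 2 i with hk
  have h2 : i < 2^(k+1) := Nat.lt_pow_succ_log_self (by norm_num) i
  have hp : (2:ℕ)^(k+1) = 2*2^k := by rw [pow_succ]; ring
  refine ⟨by have := Nat.one_le_two_pow (n:=k); omega, Or.inr ⟨by omega, ?_⟩⟩
  intro j hj
  exact (prefix_occ k j (by omega)).symm

lemma mem_even (m : ℕ) : ∃ n ≤ 2, IsLocalPeriodAt tm (2*m) n := by
  rcases Nat.eq_zero_or_pos m with rfl | hm
  · exact ⟨1, by omega, le_rfl, Or.inr ⟨one_pos, fun k hk => absurd hk (by omega)⟩⟩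
  by_cases hAB : tm (m-1) = tm m
  · refine ⟨2, le_rfl, by norm_num, Or.inl ⟨by omega, ?_⟩⟩
    intro k hk
    interval_cases k
    · simp only [Nat.add_zero]
      rw [show 2*m - 2 = 2*(m-1) by omega, tm_two_mul, tm_two_mul]
      exact hAB.symm
    · rw [show 2*m - 2 + 1 = 2*(m-1)+1 by omega]
      have h1 := tm_two_mul_add_one m
      have h2 := tm_two_mul_add_one (m-1)
      omega
  · refine ⟨1, by norm_num, le_rfl, Or.inl ⟨by omega, ?_⟩⟩
    intro k hk
    interval_cases k
    simp only [Nat.add_zero]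
    rw [show 2*m - 1 = 2*(m-1)+1 by omega, tm_two_mul]
    have h2 := tm_two_mul_add_one (m-1)
    have h3 := tm_le_one m
    have h4 := tm_le_one (m-1)
    omega

lemma exists_member (i : ℕ) : {n | IsLocalPeriodAt tm i n}.Nonempty := by
  rcases Nat.even_or_odd i with ⟨m, hm⟩ | hi
  · obtain ⟨n, _, hn⟩ := mem_even m
    exact ⟨n, by rw [show i = 2*m by omega]; exact hn⟩
  · exact ⟨_, mem_odd i hi⟩

lemma perFn_pos (i : ℕ) : 1 ≤ perFn tm i := (Nat.sInf_mem (exists_member i)).1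

lemma perFn_even_le (m : ℕ) : perFn tm (2*m) ≤ 2 := by
  obtain ⟨n, hn2, hn⟩ := mem_even m
  exact le_trans (Nat.sInf_le hn) hn2

lemma perFn_odd (i : ℕ) (hi : Odd i) : perFn tm i = 3 * 2^(Nat.log 2 i) := by
  set k := Nat.log 2 i with hk
  have hi0 : i ≠ 0 := by rintro rfl; exact (Nat.not_odd_iff_even.mpr (Even.zero)) hi
  have h1 : 2^k ≤ i := Nat.pow_log_le_self 2 hi0
  have h2 : i < 2^(k+1) := Nat.lt_pow_succ_log_self (by norm_num) i
  have hp : (2:ℕ)^(k+1) = 2*2^k := by rw [pow_succ]; ring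
  have hlow : ∀ n, IsLocalPeriodAt tm i n → 3*2^k ≤ n := by
    rintro n ⟨hn1, hcase⟩
    by_contra hlt
    push_neg at hlt
    rcases hcase with ⟨hle, hsq⟩ | ⟨hgt, hpre⟩
    · have hsq' : ∀ j < n, tm ((i-n) + j) = tm ((i-n) + n + j) := by
        intro j hj
        rw [show i - n + n = i by omega]
        exact (hsq j hj).symm
      have hev := sq_parity n hn1 (i-n) hsq'
      rw [show i - n + n = i by omega] at hev
      exact (Nat.not_even_iff_odd.mpr hi) hev
    · rcases eq_or_lt_of_le h1 with heq | hlt2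
      · have hk0 : k = 0 := by
          by_contra hk0
          have : Even ((2:ℕ)^k) := (Nat.even_pow).mpr ⟨even_two, hk0⟩
          rw [heq] at this
          exact (Nat.not_even_iff_odd.mpr hi) this
        have hi1 : i = 1 := by rw [hk0] at heq; simpa using heq.symm
        have hn2 : n = 2 := by rw [hk0] at hlt; omega
        have := hpre 0 (by omega)
        simp only [hn2, Nat.add_zero, tm_zero, tm_two] at this
        exact absurd this (by norm_num)
      · refine no_prefix_occ k n (by omega) hlt ?_
        intro j hj
        exact hpre j (by omega)
  exact le_antisymm (Nat.sInf_le (mem_odd i hi)) (hlow _ (Nat.sInf_mem (exists_member i)))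

/-! ### Estimating the summatory function -/

lemma log2_two_mul (m : ℕ) (hm : 1 ≤ m) : Nat.log 2 (2*m) = Nat.log 2 m + 1 := by
  rw [mul_comm, Nat.log_mul_base (by norm_num) (by omega)]

lemma log2_odd (a : ℕ) (ha : 1 ≤ a) : Nat.log 2 (2*a+1) = Nat.log 2 a + 1 := by
  have h1 : 2^(Nat.log 2 a) ≤ a := Nat.pow_log_le_self 2 (by omega)
  have h2 : a < 2^(Nat.log 2 a + 1) := Nat.lt_pow_succ_log_self (by norm_num) a
  refine Nat.log_eq_of_pow_le_of_lt_pow ?_ ?_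
  · rw [pow_succ]; omega
  · rw [pow_succ, pow_succ]; omega

lemma g_formula : ∀ m, 1 ≤ m →
    3 * (∑ a ∈ Finset.Ico 1 m, 2^(Nat.log 2 a)) + 2*4^(Nat.log 2 m) + 1
      = 3*m*2^(Nat.log 2 m) := by
  intro m
  induction m with
  | zero => omega
  | succ m ih =>
    intro _
    rcases Nat.eq_zero_or_pos m with rfl | hm1
    · simp [Nat.log_one_right]
    · have hIH := ih hm1
      rw [Finset.sum_Ico_succ_top hm1]
      set L := Nat.log 2 m with hL
      have h1 : 2^L ≤ m := Nat.pow_log_le_self 2 (by omega)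
      have h2 : m < 2^(L+1) := Nat.lt_pow_succ_log_self (by norm_num) m
      have h4 : (4:ℕ)^L = 2^L * 2^L := by
        rw [show (4:ℕ) = 2^2 by norm_num, ← pow_mul, two_mul, pow_add]
      rcases eq_or_lt_of_le (Nat.succ_le_of_lt h2) with heq | hlt
      · have heq' : m + 1 = 2^(L+1) := heq
        have hlog : Nat.log 2 (m+1) = L + 1 := by rw [heq', Nat.log_pow (by norm_num)]
        have h4' : (4:ℕ)^(L+1) = 4 * (2^L * 2^L) := by rw [pow_succ, h4]; ring
        have hp : (2:ℕ)^(L+1) = 2*2^L := by rw [pow_succ]; ring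
        have hm2 : m + 1 = 2*2^L := by omega
        rw [hlog, h4', hp]
        zify at hIH hm2 ⊢
        have h4z : (4:ℤ)^L = 2^L * 2^L := by
          rw [show (4:ℤ) = 2^2 by norm_num, ← pow_mul, two_mul, pow_add]
        linear_combination hIH - 3*(2:ℤ)^L * hm2 - 2*h4z
      · have hlog : Nat.log 2 (m+1) = L :=
          Nat.log_eq_of_pow_le_of_lt_pow (by omega) hlt
        rw [hlog]
        zify at hIH ⊢
        linear_combination hIH

lemma sum_pairs (m : ℕ) :
    sumFn tm (2*m) = ∑ a ∈ Finset.range m, (perFn tm (2*a) + perFn tm (2*a+1)) := by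
  induction m with
  | zero => simp [sumFn]
  | succ m ih =>
    rw [Finset.sum_range_succ, ← ih]
    unfold sumFn
    rw [show 2*(m+1) = (2*m+1)+1 by ring, Finset.sum_range_succ, Finset.sum_range_succ]
    omega

lemma odd_sum (m : ℕ) (hm : 1 ≤ m) :
    ∑ a ∈ Finset.range m, perFn tm (2*a+1)
      = 3 + 6 * ∑ a ∈ Finset.Ico 1 m, 2^(Nat.log 2 a) := by
  induction m with
  | zero => omega
  | succ m ih =>
    rcases Nat.eq_zero_or_pos m with rfl | hm1
    · rw [Finset.sum_range_succ]
      simp [perFn_odd 1 ⟨0, by norm_num⟩, Nat.log_one_right]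
    · rw [Finset.sum_range_succ, ih hm1, Finset.sum_Ico_succ_top hm1,
        perFn_odd (2*m+1) ⟨m, by ring⟩, log2_odd m hm1, pow_succ]
      ring

lemma even_sum_bounds (m : ℕ) :
    m ≤ ∑ a ∈ Finset.range m, perFn tm (2*a)
      ∧ ∑ a ∈ Finset.range m, perFn tm (2*a) ≤ 2*m := by
  constructor
  · calc m = ∑ _a ∈ Finset.range m, 1 := by simp
    _ ≤ _ := Finset.sum_le_sum (fun a _ => perFn_pos (2*a))
  · calc (∑ a ∈ Finset.range m, perFn tm (2*a)) ≤ ∑ _a ∈ Finset.range m, 2 :=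
        Finset.sum_le_sum (fun a _ => perFn_even_le a)
    _ = 2*m := by simp [mul_comm]

lemma sum_est : ∀ n, 1 ≤ n →
    |2*(sumFn tm n : ℤ) - (3*n*2^(Nat.log 2 n) - 2*4^(Nat.log 2 n))| ≤ 10*n := by
  have main_even : ∀ m, 1 ≤ m →
      (2*(sumFn tm (2*m) : ℤ) - (3*(2*m)*2^(Nat.log 2 (2*m)) - 2*4^(Nat.log 2 (2*m)))
        = 2*(∑ a ∈ Finset.range m, perFn tm (2*a) : ℤ) + 2) := by
    intro m hm
    have hsplit : sumFn tm (2*m) = (∑ a ∈ Finset.range m, perFn tm (2*a)) + 3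
        + 6 * ∑ a ∈ Finset.Ico 1 m, 2^(Nat.log 2 a) := by
      rw [sum_pairs, Finset.sum_add_distrib, odd_sum m hm]
      ring
    have hg := g_formula m hm
    set L := Nat.log 2 m with hL
    have hK : Nat.log 2 (2*m) = L + 1 := log2_two_mul m hm
    rw [hK, hsplit]
    have hp2 : (2:ℤ)^(L+1) = 2*2^L := by rw [pow_succ]; ring
    have hp4 : (4:ℤ)^(L+1) = 4*4^L := by rw [pow_succ]; ring
    zify at hg
    push_cast
    rw [hp2, hp4]
    linear_combination 4*hg
  intro n hn
  rcases Nat.even_or_odd n with ⟨m, hm⟩ | ⟨m, hm⟩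
  · have hm' : n = 2*m := by omega
    have hm1 : 1 ≤ m := by omega
    obtain ⟨hE1, hE2⟩ := even_sum_bounds m
    have hme := main_even m hm1
    rw [hm']
    push_cast
    rw [hme]
    zify at hE1 hE2
    have hm1' : (1:ℤ) ≤ m := by exact_mod_cast hm1
    rw [abs_of_nonneg (by omega)]
    omega
  · rcases Nat.eq_zero_or_pos m with rfl | hm1
    · have hn1 : n = 1 := by omega
      subst hn1
      have hS1 : sumFn tm 1 = perFn tm 0 := by unfold sumFn; simp
      have hp0 : perFn tm 0 ≤ 2 := by have := perFn_even_le 0; simpa using this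
      have hp0' : 1 ≤ perFn tm 0 := perFn_pos 0
      rw [hS1, Nat.log_one_right]
      simp only [pow_zero]
      zify at hp0 hp0'
      rw [abs_le]
      push_cast
      omega
    · subst hm
      obtain ⟨hE1, hE2⟩ := even_sum_bounds m
      have hme := main_even m hm1
      have hs : sumFn tm (2*m+1) = sumFn tm (2*m) + perFn tm (2*m) := by
        unfold sumFn; rw [Finset.sum_range_succ]
      set L := Nat.log 2 m with hL
      have hK : Nat.log 2 (2*m) = L + 1 := log2_two_mul m hm1
      have h1 : 2^L ≤ m := Nat.pow_log_le_self 2 (by omega)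
      have h2 : m < 2^(L+1) := Nat.lt_pow_succ_log_self (by norm_num) m
      have hK' : Nat.log 2 (2*m+1) = L + 1 := by
        refine Nat.log_eq_of_pow_le_of_lt_pow ?_ ?_
        · rw [pow_succ]; omega
        · rw [pow_succ, pow_succ]; rw [pow_succ] at h2; omega
      have hpm1 : 1 ≤ perFn tm (2*m) := perFn_pos (2*m)
      have hpm2 : perFn tm (2*m) ≤ 2 := perFn_even_le m
      rw [hK'] at *
      rw [hK] at hme
      have hp2 : (2:ℤ)^(L+1) = 2*2^L := by rw [pow_succ]; ring
      have key : 2*(sumFn tm (2*m+1) : ℤ) - (3*(2*m+1)*2^(L+1) - 2*4^(L+1))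
          = 2*(∑ a ∈ Finset.range m, perFn tm (2*a) : ℤ) + 2
            + 2*(perFn tm (2*m):ℤ) - 6*2^L := by
        rw [hs]
        push_cast
        rw [hp2]
        linear_combination hme
      zify at hE1 hE2 hpm1 hpm2 h1
      have hP0 : (0:ℤ) < 2^L := by positivity
      have hP1 : (1:ℤ) ≤ 2^L := by omega
      have hm1' : (1:ℤ) ≤ m := by exact_mod_cast hm1
      push_cast
      rw [key, abs_le]
      constructor <;> nlinarith [hP1, h1, hE1, hE2, hpm1, hpm2]

/-! ### The limit profile function -/

noncomputable def Ffn : ℝ → ℝ := fun x => (3/2) * (2:ℝ)^(-x) - (4:ℝ)^(-x)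

noncomputable def Phi : ℝ → ℝ := fun y => Ffn (Int.fract y)

lemma Ffn_cont : Continuous Ffn := by
  unfold Ffn
  have h : ∀ c : ℝ, 0 < c → Continuous fun x : ℝ => c^(-x) := by
    intro c hc
    simp only [Real.rpow_def_of_pos hc]
    exact Real.continuous_exp.comp (continuous_const.mul continuous_neg)
  exact (continuous_const.mul (h 2 (by norm_num))).sub (h 4 (by norm_num))

lemma Ffn_eq : Ffn 0 = Ffn 1 := by
  unfold Ffn
  rw [neg_zero, Real.rpow_zero, Real.rpow_zero, Real.rpow_neg_one, Real.rpow_neg_one]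
  norm_num

lemma Phi_cont : Continuous Phi := ContinuousOn.comp_fract'' Ffn_cont.continuousOn Ffn_eq

lemma Phi_per : Function.Periodic Phi 1 := by
  intro x
  unfold Phi
  rw [Int.fract_add_one]

lemma key_bound (n : ℕ) (hn : 1 ≤ n) :
    |perComplexity tm n - (n : ℝ) * Phi (Int.fract (Real.logb 2 n))| ≤ 5 := by
  set K := Nat.log 2 n with hK
  have hnpos : (0:ℝ) < n := by exact_mod_cast hn
  have hne : (n:ℝ) ≠ 0 := ne_of_gt hnpos
  have hz : (2:ℝ) ^ (Real.logb 2 n) = n := Real.rpow_logb (by norm_num) (by norm_num) hnpos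
  have hfl : ⌊Real.logb 2 (n:ℝ)⌋ = (K:ℤ) := by
    rw [show (2:ℝ) = ((2:ℕ):ℝ) by norm_num, Real.floor_logb_natCast (le_of_lt hnpos),
      Int.log_natCast]
  have hu : Int.fract (Real.logb 2 n) = Real.logb 2 n - (K:ℝ) := by
    rw [Int.fract, hfl]
    push_cast
    ring
  have hA : (2:ℝ) ^ (-(Int.fract (Real.logb 2 n))) = 2^K / n := by
    rw [hu, neg_sub, Real.rpow_sub (by norm_num), hz, Real.rpow_natCast]
  have hB : (4:ℝ) ^ (-(Int.fract (Real.logb 2 n))) = (2^K / n) * (2^K / n) := by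
    rw [show (4:ℝ) = 2*2 by norm_num, Real.mul_rpow (by norm_num) (by norm_num), hA]
  have h44 : (4:ℝ)^K = 2^K * 2^K := by rw [← mul_pow]; norm_num
  have hPhi : (n:ℝ) * Phi (Int.fract (Real.logb 2 n)) = (3/2)*2^K - 4^K/n := by
    show (n:ℝ) * Ffn (Int.fract (Int.fract (Real.logb 2 n))) = _
    rw [Int.fract_fract]
    unfold Ffn
    rw [hA, hB, h44]
    field_simp
  have hsum := sum_est n hn
  have hsumR : |2*(sumFn tm n : ℝ) - (3*n*2^K - 2*4^K)| ≤ 10*n := by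
    have := (@Int.cast_le ℝ _ _ _).mpr hsum
    push_cast at this
    convert this using 2
  have hD : perComplexity tm n - (n:ℝ) * Phi (Int.fract (Real.logb 2 n))
      = (2*(sumFn tm n : ℝ) - (3*n*2^K - 2*4^K))/(2*n) := by
    rw [hPhi]
    unfold perComplexity
    field_simp
  rw [hD, abs_div, abs_of_pos (by positivity : (0:ℝ) < 2*n)]
  rw [div_le_iff₀ (by positivity : (0:ℝ) < 2*n)]
  calc |2*(sumFn tm n : ℝ) - (3*n*2^K - 2*4^K)| ≤ 10*n := hsumR
  _ ≤ 5 * (2*n) := by nlinarith [hnpos]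

theorem tm_perComplexity_asymptotics :
    ∃ Φ : ℝ → ℝ, Continuous Φ ∧ Function.Periodic Φ 1 ∧
      (fun n : ℕ => perComplexity tm n - (n : ℝ) * Φ (Int.fract (Real.logb 2 n)))
        =O[atTop] (fun n : ℕ => Real.log n) := by
  refine ⟨Phi, Phi_cont, Phi_per, ?_⟩
  rw [isBigO_iff]
  refine ⟨8, ?_⟩
  filter_upwards [eventually_ge_atTop 2] with n hn
  have h5 := key_bound n (by omega)
  have hn2 : (2:ℝ) ≤ n := by exact_mod_cast hn
  have hlog2 : Real.log 2 ≤ Real.log n := Real.log_le_log (by norm_num) hn2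
  have hlogpos : 0 ≤ Real.log n := Real.log_nonneg (by linarith)
  rw [Real.norm_eq_abs, Real.norm_eq_abs, abs_of_nonneg hlogpos]
  have hl2 := Real.log_two_gt_d9
  calc |perComplexity tm n - (n : ℝ) * Phi (Int.fract (Real.logb 2 n))| ≤ 5 := h5
  _ ≤ 8 * Real.log n := by nlinarith
end

section
/- For every natural number ℓ ≥ 0, the summatory function of the periodicity function of the period-doubling word at powers of 2 satisfies P_pd(2^ℓ) = (5/9 + (2/3)ℓ)·2^ℓ + 1/2 − (1/18)(−1)^ℓ. -/
open Finset Filter Asymptotics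

/-- The period-doubling word: `pd_i = 1` iff the 2-adic valuation of `i+1` is odd. -/
def pd (i : ℕ) : ℕ :=
  if Odd ((i + 1).factorization 2) then 1 else 0

/-!
A local period of `pd` at `j ≥ 2` is either `1` or even: an odd shift moves odd positions onto even
ones, where `pd` vanishes. Since `pd` interleaves `0`s with the complement of `pd`, `2m` is a local
period at `j` iff `m` is one at `j / 2`. Hence `p(j) = 1` if `pd(j-1) = pd(j)` and
`p(j) = 2 p(j / 2)` otherwise. Splitting `P(2n)` into even and odd positions gives linear
recurrences between `P`, the number of `1`s and the weighted count `∑ p(i) (pd(i-1) + pd(i))`,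
which at `n = 2^ℓ` are solved by induction on `ℓ`.
-/

section LocalPeriod

variable {α : Type*} {w : ℕ → α} {i n : ℕ}

/- Both alternatives say that `w` agrees with its shift by `n` on the window `[i - n, i)`: when
`n > i` the truncated subtraction turns the window into `[0, i)`. -/
theorem isLocalPeriodAt_iff :
    IsLocalPeriodAt w i n ↔ 1 ≤ n ∧ ∀ x, i - n ≤ x → x < i → w x = w (x + n) := by
  refine and_congr_right fun _ => ⟨?_, fun h => ?_⟩
  · rintro (⟨hni, h⟩ | ⟨-, h⟩) x hx hxi
    · have := h (x - (i - n)) (by omega)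
      rwa [show i + (x - (i - n)) = x + n by omega, show i - n + (x - (i - n)) = x by omega,
        eq_comm] at this
    · rw [add_comm]; exact h x hxi
  · rcases le_or_gt n i with hni | hin
    · refine Or.inl ⟨hni, fun k hk => ?_⟩
      have := h (i - n + k) (by omega) (by omega)
      rwa [show i - n + k + n = i + k by omega, eq_comm] at this
    · exact Or.inr ⟨hin, fun k hk => by rw [add_comm]; exact h k (by omega) hk⟩

theorem isLocalPeriodAt_one_iff (hi : 1 ≤ i) : IsLocalPeriodAt w i 1 ↔ w (i - 1) = w i := by
  rw [isLocalPeriodAt_iff]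
  refine ⟨fun ⟨_, h⟩ => ?_, fun h => ⟨le_rfl, fun x hx hxi => ?_⟩⟩
  · simpa [Nat.sub_add_cancel hi] using h (i - 1) le_rfl (by omega)
  · obtain rfl : x = i - 1 := by omega
    rwa [Nat.sub_add_cancel hi]

theorem perFn_le (h : IsLocalPeriodAt w i n) : perFn w i ≤ n := Nat.sInf_le h

theorem isLocalPeriodAt_perFn (h : IsLocalPeriodAt w i n) : IsLocalPeriodAt w i (perFn w i) :=
  Nat.sInf_mem (s := {n | IsLocalPeriodAt w i n}) ⟨n, h⟩

theorem perFn_eq_one (h : IsLocalPeriodAt w i 1) : perFn w i = 1 :=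
  le_antisymm (perFn_le h) (isLocalPeriodAt_perFn h).1

theorem isLocalPeriodAt_zero_one : IsLocalPeriodAt w 0 1 :=
  isLocalPeriodAt_iff.2 ⟨le_rfl, fun _ _ hx => absurd hx (Nat.not_lt_zero _)⟩

theorem perFn_zero (w : ℕ → α) : perFn w 0 = 1 := perFn_eq_one isLocalPeriodAt_zero_one

-- The hypotheses say that `v` interleaves a constant word with an injective recoding of `w`.
theorem isLocalPeriodAt_two_mul_iff {β : Type*} {v : ℕ → β}
    (heven : ∀ a b, v (2 * a) = v (2 * b))
    (hodd : ∀ a b, v (2 * a + 1) = v (2 * b + 1) ↔ w a = w b) (j m : ℕ) :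
    IsLocalPeriodAt v j (2 * m) ↔ IsLocalPeriodAt w (j / 2) m := by
  rw [isLocalPeriodAt_iff, isLocalPeriodAt_iff]
  refine and_congr (by omega) ⟨fun h a ha haj => ?_, fun h x hx hxj => ?_⟩
  · have := h (2 * a + 1) (by omega) (by omega)
    rwa [show 2 * a + 1 + 2 * m = 2 * (a + m) + 1 by ring, hodd] at this
  · obtain ⟨a, rfl | rfl⟩ := Nat.even_or_odd' x
    · rw [← mul_add]; exact heven _ _
    · rw [show 2 * a + 1 + 2 * m = 2 * (a + m) + 1 by ring, hodd]
      exact h a (by omega) (by omega)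

end LocalPeriod

theorem pd_two_mul (k : ℕ) : pd (2 * k) = 0 := by
  rw [pd, Nat.factorization_eq_zero_of_not_dvd (by omega : ¬ 2 ∣ 2 * k + 1)]
  simp

theorem pd_two_mul_add_one (k : ℕ) : pd (2 * k + 1) = 1 - pd k := by
  rw [pd, pd, show 2 * k + 1 + 1 = 2 * (k + 1) by ring,
    Nat.factorization_mul two_ne_zero k.succ_ne_zero, Nat.prime_two.factorization]
  simp only [Finsupp.add_apply, Finsupp.single_eq_same]
  by_cases h : Odd ((k + 1).factorization 2) <;> simp [h, Nat.odd_add]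

theorem pd_le_one (k : ℕ) : pd k ≤ 1 := by
  unfold pd; split_ifs <;> simp

theorem pd_eq_zero_or_eq_one (k : ℕ) : pd k = 0 ∨ pd k = 1 := by
  have := pd_le_one k; omega

@[simp] theorem pd_zero : pd 0 = 0 := pd_two_mul 0

@[simp] theorem pd_one : pd 1 = 1 := by simpa using pd_two_mul_add_one 0

theorem pd_two_pow_sub_one (l : ℕ) : (pd (2 ^ l - 1) : ℝ) = (1 - (-1) ^ l) / 2 := by
  rw [pd, Nat.sub_add_cancel Nat.one_le_two_pow, Nat.prime_two.factorization_pow,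
    Finsupp.single_eq_same]
  rcases Nat.even_or_odd l with h | h
  · simp [h.neg_one_pow, Nat.not_odd_iff_even.2 h]
  · simp [h.neg_one_pow, h]

theorem isLocalPeriodAt_pd_two_mul_iff (j m : ℕ) :
    IsLocalPeriodAt pd j (2 * m) ↔ IsLocalPeriodAt pd (j / 2) m := by
  refine isLocalPeriodAt_two_mul_iff (fun a b => by rw [pd_two_mul, pd_two_mul])
    (fun a b => ?_) j m
  rw [pd_two_mul_add_one, pd_two_mul_add_one]
  have := pd_le_one a; have := pd_le_one b
  omega

theorem exists_isLocalPeriodAt_pd (j : ℕ) : ∃ n, IsLocalPeriodAt pd j n := by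
  induction j using Nat.strong_induction_on with
  | _ j ih =>
    rcases Nat.eq_zero_or_pos j with rfl | hj
    · exact ⟨1, isLocalPeriodAt_zero_one⟩
    · obtain ⟨n, hn⟩ := ih (j / 2) (by omega)
      exact ⟨2 * n, (isLocalPeriodAt_pd_two_mul_iff j n).2 hn⟩

/- Two consecutive odd positions `2a+1`, `2a+3` of `pd` cannot both carry `0`, since one of
`a`, `a+1` is even. An odd local period `n ≥ 3` would force exactly that: it shifts odd positions
to even ones, where `pd` vanishes. -/
theorem not_isLocalPeriodAt_pd_of_odd {j n : ℕ} (hj : 2 ≤ j) (hn : Odd n) (hn1 : n ≠ 1) :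
    ¬ IsLocalPeriodAt pd j n := by
  rw [isLocalPeriodAt_iff]
  rintro ⟨-, h⟩
  obtain ⟨t, rfl⟩ := hn
  rcases le_or_gt j (2 * t + 1) with hjn | hnj
  · have := h 1 (by omega) (by omega)
    rw [pd_one, show 1 + (2 * t + 1) = 2 * (t + 1) by ring, pd_two_mul] at this
    exact one_ne_zero this
  · have hzero : ∀ a, j - (2 * t + 1) ≤ 2 * a + 1 → 2 * a + 1 < j + (2 * t + 1) →
        pd (2 * a + 1) = 0 := by
      intro a ha haj
      rcases lt_or_ge (2 * a + 1) j with hlt | hge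
      · rw [h _ ha hlt, show 2 * a + 1 + (2 * t + 1) = 2 * (a + t + 1) by ring, pd_two_mul]
      · have := h (2 * (a - t)) (by omega) (by omega)
        rwa [pd_two_mul, show 2 * (a - t) + (2 * t + 1) = 2 * a + 1 by omega, eq_comm] at this
    set a := (j - (2 * t + 1)) / 2
    have h₁ := hzero a (by omega) (by omega)
    have h₂ := hzero (a + 1) (by omega) (by omega)
    rw [pd_two_mul_add_one] at h₁ h₂
    obtain ⟨b, hb | hb⟩ := Nat.even_or_odd' a
    · rw [hb, pd_two_mul] at h₁; omega
    · rw [hb, show 2 * b + 1 + 1 = 2 * (b + 1) by ring, pd_two_mul] at h₂; omega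

theorem perFn_pd_of_eq {j : ℕ} (hj : 1 ≤ j) (h : pd (j - 1) = pd j) : perFn pd j = 1 :=
  perFn_eq_one ((isLocalPeriodAt_one_iff hj).2 h)

theorem perFn_pd_of_ne {j : ℕ} (hj : 1 ≤ j) (h : pd (j - 1) ≠ pd j) :
    perFn pd j = 2 * perFn pd (j / 2) := by
  obtain ⟨m, hm⟩ := exists_isLocalPeriodAt_pd (j / 2)
  have hmem := (isLocalPeriodAt_pd_two_mul_iff j _).2 (isLocalPeriodAt_perFn hm)
  have hmin := isLocalPeriodAt_perFn hmem
  refine le_antisymm (perFn_le hmem) ?_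
  obtain ⟨t, ht | ht⟩ := Nat.even_or_odd' (perFn pd j)
  · rw [ht] at hmin ⊢
    exact Nat.mul_le_mul_left 2 (perFn_le ((isLocalPeriodAt_pd_two_mul_iff j t).1 hmin))
  · have hne : perFn pd j ≠ 1 := fun h1 => h ((isLocalPeriodAt_one_iff hj).1 (h1 ▸ hmin))
    rcases (by omega : j = 1 ∨ 2 ≤ j) with rfl | hj2
    · rw [Nat.div_eq_of_lt one_lt_two, perFn_zero]
      have := hmin.1
      omega
    · exact absurd hmin (not_isLocalPeriodAt_pd_of_odd hj2 ⟨t, ht⟩ hne)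

theorem perFn_pd_two_mul_add_one (i : ℕ) :
    perFn pd (2 * i + 1) = if pd i = 1 then 1 else 2 * perFn pd i := by
  have hprev : pd (2 * i + 1 - 1) = 0 := by rw [Nat.add_sub_cancel, pd_two_mul]
  have := pd_le_one i
  split_ifs with h
  · exact perFn_pd_of_eq (by omega) (by rw [hprev, pd_two_mul_add_one]; omega)
  · rw [perFn_pd_of_ne (by omega) (by rw [hprev, pd_two_mul_add_one]; omega)]
    congr 2; omega

theorem perFn_pd_two_mul {i : ℕ} (hi : 1 ≤ i) :
    perFn pd (2 * i) = if pd (i - 1) = 1 then 1 else 2 * perFn pd i := by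
  have hprev : pd (2 * i - 1) = 1 - pd (i - 1) := by
    rw [show 2 * i - 1 = 2 * (i - 1) + 1 by omega, pd_two_mul_add_one]
  have := pd_le_one (i - 1)
  split_ifs with h
  · exact perFn_pd_of_eq (by omega) (by rw [hprev, pd_two_mul]; omega)
  · rw [perFn_pd_of_ne (by omega) (by rw [hprev, pd_two_mul]; omega)]
    congr 2; omega

theorem sum_range_two_mul_pd_add (n : ℕ) :
    ∑ i ∈ range (2 * n), pd i + ∑ i ∈ range n, pd i = n := by
  induction n with
  | zero => simp
  | succ n ih =>
    rw [show 2 * (n + 1) = 2 * n + 1 + 1 by ring, sum_range_succ, sum_range_succ, sum_range_succ,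
      pd_two_mul, pd_two_mul_add_one]
    have := pd_le_one n
    omega

/- The sums of `p` over the positions of `1`s and over the positions preceded by a `1` enter the
recursion for `sumFn pd` only through their sum. -/
noncomputable def pdWeightedOnes (n : ℕ) : ℕ :=
  ∑ i ∈ range n, perFn pd i * (pd (i - 1) + pd i)

theorem pdWeightedOnes_two_mul {n : ℕ} (hn : 1 ≤ n) :
    pdWeightedOnes (2 * n) + 2 * pdWeightedOnes n + 2 = 4 * sumFn pd n := by
  induction n, hn using Nat.le_induction with
  | base => simp [pdWeightedOnes, sumFn, sum_range_succ, perFn_zero, perFn_pd_two_mul_add_one 0]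
  | succ n hn ih =>
    have hterm : perFn pd (2 * n) * (pd (2 * n - 1) + pd (2 * n))
        + perFn pd (2 * n + 1) * (pd (2 * n + 1 - 1) + pd (2 * n + 1))
        + 2 * (perFn pd n * (pd (n - 1) + pd n)) = 4 * perFn pd n := by
      rw [perFn_pd_two_mul hn, perFn_pd_two_mul_add_one, Nat.add_sub_cancel, pd_two_mul,
        pd_two_mul_add_one, show 2 * n - 1 = 2 * (n - 1) + 1 by omega, pd_two_mul_add_one]
      rcases pd_eq_zero_or_eq_one n with h | h <;>
        rcases pd_eq_zero_or_eq_one (n - 1) with h' | h' <;> simp [h, h'] <;> ring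
    unfold pdWeightedOnes sumFn at *
    rw [show 2 * (n + 1) = 2 * n + 1 + 1 by ring, sum_range_succ, sum_range_succ, sum_range_succ,
      sum_range_succ]
    linarith

theorem sumFn_pd_two_mul {n : ℕ} (hn : 1 ≤ n) :
    sumFn pd (2 * n) + 2 * pdWeightedOnes n + 1 + pd (n - 1)
      = 2 * ∑ i ∈ range n, pd i + 4 * sumFn pd n := by
  induction n, hn using Nat.le_induction with
  | base => simp [pdWeightedOnes, sumFn, sum_range_succ, perFn_zero, perFn_pd_two_mul_add_one 0]
  | succ n hn ih =>
    have hterm : perFn pd (2 * n) + perFn pd (2 * n + 1)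
        + 2 * (perFn pd n * (pd (n - 1) + pd n)) = pd (n - 1) + pd n + 4 * perFn pd n := by
      rw [perFn_pd_two_mul hn, perFn_pd_two_mul_add_one]
      rcases pd_eq_zero_or_eq_one n with h | h <;>
        rcases pd_eq_zero_or_eq_one (n - 1) with h' | h' <;> simp [h, h'] <;> ring
    unfold pdWeightedOnes sumFn at *
    rw [show 2 * (n + 1) = 2 * n + 1 + 1 by ring, sum_range_succ, sum_range_succ, sum_range_succ,
      sum_range_succ, sum_range_succ, Nat.add_sub_cancel]
    linarith

theorem sum_range_two_pow_pd (l : ℕ) :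
    ∑ i ∈ range (2 ^ l), (pd i : ℝ) = (2 ^ l - (-1) ^ l) / 3 := by
  induction l with
  | zero => simp
  | succ l ih =>
    have := sum_range_two_mul_pd_add (2 ^ l)
    rw [← pow_succ'] at this
    have hR : ∑ i ∈ range (2 ^ (l + 1)), (pd i : ℝ) + ∑ i ∈ range (2 ^ l), (pd i : ℝ) = 2 ^ l := by
      exact_mod_cast this
    linear_combination hR - ih

theorem sumFn_pd_two_pow_and_pdWeightedOnes_two_pow (l : ℕ) :
    (sumFn pd (2 ^ l) : ℝ) = (5 / 9 + (2 / 3 : ℝ) * l) * 2 ^ l + 1 / 2 - (1 / 18 : ℝ) * (-1) ^ l ∧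
    (pdWeightedOnes (2 ^ l) : ℝ) = (2 / 9 + (2 / 3 : ℝ) * l) * 2 ^ l - (2 / 9 : ℝ) * (-1) ^ l := by
  induction l with
  | zero => norm_num [sumFn, pdWeightedOnes, perFn_zero]
  | succ l ih =>
    obtain ⟨hS, hW⟩ := ih
    have hpos : 1 ≤ 2 ^ l := Nat.one_le_two_pow
    have hW' : (pdWeightedOnes (2 ^ (l + 1)) : ℝ) + 2 * pdWeightedOnes (2 ^ l) + 2
        = 4 * sumFn pd (2 ^ l) := by
      rw [pow_succ']; exact_mod_cast pdWeightedOnes_two_mul hpos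
    have hS' : (sumFn pd (2 ^ (l + 1)) : ℝ) + 2 * pdWeightedOnes (2 ^ l) + 1 + pd (2 ^ l - 1)
        = 2 * ∑ i ∈ range (2 ^ l), (pd i : ℝ) + 4 * sumFn pd (2 ^ l) := by
      rw [pow_succ']; exact_mod_cast sumFn_pd_two_mul hpos
    rw [pd_two_pow_sub_one, sum_range_two_pow_pd] at hS'
    push_cast
    constructor
    · linear_combination hS' + 4 * hS - 2 * hW
    · linear_combination hW' + 4 * hS - 2 * hW

theorem pd_sumFn_pow_two (l : ℕ) :
    (sumFn pd (2 ^ l) : ℝ) =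
      (5 / 9 + (2 / 3 : ℝ) * l) * 2 ^ l + 1 / 2 - (1 / 18 : ℝ) * (-1) ^ l :=
  (sumFn_pd_two_pow_and_pdWeightedOnes_two_pow l).1
end
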